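/- Let m, n ≥ 1 be integers. The cycle graph semiring S_{c_n} satisfies the identity c_m ≈ x³ if and only if n does not divide m. -/

import Mathlib

universe u

-- The underlying set of the graph semiring of a graph with vertex set `V`:
-- the vertices together with two extra elements `0` and `ω`.
inductive GS (V : Type u) : Type u where
  | zero : GS V
  | omega : GS V
  | vert : V → GS V

-- Multiplication of the graph semiring: `x·y = ω` if `x, y` are vertices joined by an
-- edge, and `x·y = 0` otherwise.
open Classical in
noncomputable def gsMul {V : Type u} (E : V → V → Prop) : GS V → GS V → GS V
  | GS.vert a, GS.vert b => if E a b then GS.omega else GS.zero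
  | _, _ => GS.zero

-- The flat addition of the graph semiring: `a + b = a` if `a = b`, else `0`.
open Classical in
noncomputable def gsAdd {V : Type u} (a b : GS V) : GS V :=
  if a = b then a else GS.zero

-- `gsSum f n = f 0 + f 1 + ⋯ + f n` (a sum of `n + 1` terms).
noncomputable def gsSum {V : Type u} (f : ℕ → GS V) : ℕ → GS V
  | 0 => f 0
  | n + 1 => gsAdd (gsSum f n) (f (n + 1))

-- `E` is a graph (in the sense of the paper): a directed graph with no isolated
-- vertices in which every vertex has out-degree at most 1 and in-degree at most 1.
def IsGraph {V : Type u} (E : V → V → Prop) : Prop :=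
  (∀ v : V, ∃ u : V, E v u ∨ E u v) ∧
  (∀ v a b : V, E v a → E v b → a = b) ∧
  (∀ v a b : V, E a v → E b v → a = b)

-- `v 0, v 1, …, v (m - 1)` is a path of the graph `E` with `m` vertices.
def IsPathOn {V : Type u} (E : V → V → Prop) (m : ℕ) (v : ℕ → V) : Prop :=
  (∀ i < m, ∀ j < m, v i = v j → i = j) ∧
  (∀ i : ℕ, i + 1 < m → E (v i) (v (i + 1)))

-- `v 0, v 1, …, v (m - 1)` is a cycle of the graph `E` of length `m`.
def IsCycleOn {V : Type u} (E : V → V → Prop) (m : ℕ) (v : ℕ → V) : Prop :=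
  1 ≤ m ∧
  (∀ i < m, ∀ j < m, v i = v j → i = j) ∧
  (∀ i : ℕ, i + 1 < m → E (v i) (v (i + 1))) ∧
  E (v (m - 1)) (v 0)

-- The edge relation of the cycle with vertex set `ZMod n`: edges `(i, i + 1)`.
def cycleE (n : ℕ) : ZMod n → ZMod n → Prop := fun i j => j = i + 1

-- The cycle graph semiring `S_{c_n}` satisfies the identity `c_m ≈ x³`:
-- for all `x, x_1, …, x_m` one has `x_1x_2 + x_2x_3 + ⋯ + x_{m-1}x_m + x_mx_1 = x·x·x`.
def cycleSatC (n m : ℕ) : Prop :=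
  ∀ (x : GS (ZMod n)) (g : ℕ → GS (ZMod n)),
    gsSum (fun i => gsMul (cycleE n) (g i) (g ((i + 1) % m))) (m - 1) =
      gsMul (cycleE n) (gsMul (cycleE n) x x) x

/-! Every product of three elements of a graph semiring is `0`, and a flat sum is `ω` exactly
when every summand is `ω`. So `c_m ≈ x³` fails precisely when some `x_1, …, x_m` are vertices
forming a closed walk of length `m`. In `c_n` each step of a walk adds `1` in `ZMod n`, so such a
walk exists iff `m = 0` in `ZMod n`, i.e. iff `n ∣ m`. -/

section GraphSemiring

variable {V : Type u} {E : V → V → Prop}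

theorem gsMul_eq_omega_iff {x y : GS V} :
    gsMul E x y = GS.omega ↔ ∃ a b, x = GS.vert a ∧ y = GS.vert b ∧ E a b := by
  cases x <;> cases y <;> simp [gsMul]

theorem gsMul_eq_zero_or_eq_omega (x y : GS V) :
    gsMul E x y = GS.zero ∨ gsMul E x y = GS.omega := by
  cases x <;> cases y <;> simp only [gsMul, reduceCtorEq, or_false]
  split_ifs <;> simp

theorem gsMul_gsMul_eq_zero (x y z : GS V) : gsMul E (gsMul E x y) z = GS.zero := by
  rcases gsMul_eq_zero_or_eq_omega (E := E) x y with h | h <;> rw [h] <;> rfl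

theorem gsAdd_eq_omega_iff {a b : GS V} : gsAdd a b = GS.omega ↔ a = GS.omega ∧ b = GS.omega := by
  unfold gsAdd
  split_ifs with hab
  · subst hab; simp
  · simp only [false_iff, not_and]
    rintro rfl rfl
    exact hab rfl

theorem gsSum_eq_omega_iff {f : ℕ → GS V} {k : ℕ} :
    gsSum f k = GS.omega ↔ ∀ i ≤ k, f i = GS.omega := by
  induction k with
  | zero => simp [gsSum]
  | succ k ih =>
    simp only [gsSum, gsAdd_eq_omega_iff, ih, Nat.le_succ_iff, or_imp, forall_and, forall_eq]

theorem gsSum_eq_zero_or_eq_omega {f : ℕ → GS V} (hf : ∀ i, f i = GS.zero ∨ f i = GS.omega)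
    (k : ℕ) : gsSum f k = GS.zero ∨ gsSum f k = GS.omega := by
  induction k with
  | zero => exact hf 0
  | succ k ih =>
    unfold gsSum gsAdd
    split_ifs
    · exact ih
    · exact Or.inl rfl

end GraphSemiring

/-- The value of the word `x_1x_2 + x_2x_3 + ⋯ + x_mx_1` at `x_{i+1} = g i`. -/
noncomputable def cycleWord {V : Type u} (E : V → V → Prop) (m : ℕ) (g : ℕ → GS V) : GS V :=
  gsSum (fun i => gsMul E (g i) (g ((i + 1) % m))) (m - 1)

theorem cycleSatC_iff_forall_cycleWord_ne_omega {n m : ℕ} :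
    cycleSatC n m ↔ ∀ g, cycleWord (cycleE n) m g ≠ GS.omega := by
  show (∀ x g, cycleWord (cycleE n) m g = gsMul (cycleE n) (gsMul (cycleE n) x x) x) ↔ _
  simp only [gsMul_gsMul_eq_zero]
  refine ⟨fun h g => by simp [h GS.zero g], fun h _ g => ?_⟩
  exact (gsSum_eq_zero_or_eq_omega (fun _ => gsMul_eq_zero_or_eq_omega _ _) _).resolve_right (h g)

theorem gsMul_cycleE_eq_omega_iff {n : ℕ} {x y : GS (ZMod n)} :
    gsMul (cycleE n) x y = GS.omega ↔ ∃ a, x = GS.vert a ∧ y = GS.vert (a + 1) := by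
  rw [gsMul_eq_omega_iff]
  constructor
  · rintro ⟨a, b, rfl, rfl, rfl⟩
    exact ⟨a, rfl, rfl⟩
  · rintro ⟨a, rfl, rfl⟩
    exact ⟨a, a + 1, rfl, rfl, rfl⟩

theorem ZMod.natCast_mod_of_dvd {n m : ℕ} (h : n ∣ m) (k : ℕ) : ((k % m : ℕ) : ZMod n) = k :=
  (ZMod.natCast_eq_natCast_iff _ _ _).mpr ((Nat.mod_modEq k m).of_dvd h)

theorem cycleWord_natCast_eq_omega {n m : ℕ} (h : n ∣ m) :
    cycleWord (cycleE n) m (fun i => GS.vert (i : ZMod n)) = GS.omega := by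
  refine gsSum_eq_omega_iff.mpr fun i _ => gsMul_cycleE_eq_omega_iff.mpr ⟨i, rfl, ?_⟩
  dsimp only
  rw [ZMod.natCast_mod_of_dvd h, Nat.cast_succ]

theorem eq_vert_add_of_gsMul_cycleE_eq_omega {n k : ℕ} {g : ℕ → GS (ZMod n)} {a : ZMod n}
    (h0 : g 0 = GS.vert a) (hstep : ∀ i < k, gsMul (cycleE n) (g i) (g (i + 1)) = GS.omega) :
    ∀ i ≤ k, g i = GS.vert (a + i) := by
  intro i
  induction i with
  | zero => simpa using h0
  | succ i ih =>
    intro hi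
    obtain ⟨b, hb, hb'⟩ := gsMul_cycleE_eq_omega_iff.mp (hstep i hi)
    obtain rfl : b = a + i := GS.vert.inj (hb.symm.trans (ih (by omega)))
    rw [hb', Nat.cast_succ, add_assoc]

theorem natCast_eq_zero_of_cycleWord_eq_omega {n m : ℕ} (hm : m ≠ 0) {g : ℕ → GS (ZMod n)}
    (hg : cycleWord (cycleE n) m g = GS.omega) : (m : ZMod n) = 0 := by
  have hstep : ∀ i ≤ m - 1, ∃ a, g i = GS.vert a ∧ g ((i + 1) % m) = GS.vert (a + 1) :=
    fun i hi => gsMul_cycleE_eq_omega_iff.mp (gsSum_eq_omega_iff.mp hg i hi)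
  obtain ⟨a, ha, -⟩ := hstep 0 (Nat.zero_le _)
  have hwalk := eq_vert_add_of_gsMul_cycleE_eq_omega ha fun i hi => by
    obtain ⟨b, hb, hb'⟩ := hstep i hi.le
    rw [Nat.mod_eq_of_lt (by omega)] at hb'
    exact gsMul_cycleE_eq_omega_iff.mpr ⟨b, hb, hb'⟩
  obtain ⟨b, hb, hb'⟩ := hstep (m - 1) le_rfl
  have hm1 : m - 1 + 1 = m := Nat.sub_add_cancel (Nat.one_le_iff_ne_zero.mpr hm)
  rw [hm1, Nat.mod_self] at hb'
  have hlast : b = a + ((m - 1 : ℕ) : ZMod n) := GS.vert.inj (hb.symm.trans (hwalk _ le_rfl))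
  have hclose : a = b + 1 := GS.vert.inj (ha.symm.trans hb')
  calc (m : ZMod n) = ((m - 1 : ℕ) : ZMod n) + 1 := by rw [← Nat.cast_add_one, hm1]
    _ = 0 := by linear_combination -hlast - hclose

theorem stmt_8_general (m n : ℕ) : cycleSatC n m ↔ ¬ (n ∣ m) := by
  rw [cycleSatC_iff_forall_cycleWord_ne_omega]
  constructor
  · exact fun h hdvd => h _ (cycleWord_natCast_eq_omega hdvd)
  · intro hndvd g hg
    have hm : m ≠ 0 := by
      rintro rfl
      exact hndvd (dvd_zero n)
    exact hndvd ((ZMod.natCast_eq_zero_iff m n).mp (natCast_eq_zero_of_cycleWord_eq_omega hm hg))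

/-- For `m, n ≥ 1`, the cycle graph semiring `S_{c_n}` satisfies the
identity `c_m ≈ x³` iff `n` does not divide `m`. -/
theorem stmt_8 (m n : ℕ) (hm : 1 ≤ m) (hn : 1 ≤ n) :
    cycleSatC n m ↔ ¬ (n ∣ m) :=
  stmt_8_general m n
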